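/- Let Φ : H → D be a continuous map from the upper half plane to a topological space D, with a group element γ acting on D such that Φ(z+1) = γ·Φ(z) for all z ∈ H. If additionally γ, viewed as an automorphism of a finitely generated free ℤ-module, satisfies γ ≡ Id mod m for some m ≥ 3 and γ has finite order, then γ = Id and Φ descends along z ↦ exp(2πiz) to a map on the punctured disk with trivial monodromy. -/

import Mathlib

/-!
Serre's lemma. Since `m ≥ 3`, some prime power `p ^ a` divides `m` with `a ≥ 1`, and `a ≥ 2` if
`p = 2`; so `A = 1 + p ^ a M`. If `A ^ k = 1`, then `p ∣ M`: for a prime factor `q ≠ p` of `k`,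
`A ^ q = 1 + p ^ a (q M + p ^ a T)`, while `A ^ p = 1 + p ^ (a + 1) (M + p U)` (this is where
`a ≥ 2` is needed for `p = 2`), and induction on `k` applies to `A ^ q`. Iterating, every power of
`p` divides `M`, so `M = 0` by Krull's intersection theorem. Once the monodromy is trivial, `Φ` is
`1`-periodic on the upper half plane and descends along the open map `z ↦ exp (2πiz)`.
-/

open Polynomial

theorem Polynomial.X_pow_three_dvd_one_add_X_pow_sub (n : ℕ) :
    (X ^ 3 : ℤ[X]) ∣ (1 + X) ^ n - 1 - (n : ℤ[X]) * X - (n.choose 2 : ℤ[X]) * X ^ 2 := by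
  rw [X_pow_dvd_iff]
  intro d hd
  interval_cases d <;> simp [coeff_one_add_X_pow, coeff_X, coeff_one]

theorem exists_one_add_pow_eq {S : Type*} [CommRing S] (x : S) (n : ℕ) :
    ∃ T, (1 + x) ^ n = 1 + n * x + n.choose 2 * x ^ 2 + x ^ 3 * T := by
  obtain ⟨T, hT⟩ := X_pow_three_dvd_one_add_X_pow_sub n
  refine ⟨aeval x T, ?_⟩
  have := congrArg (aeval x) hT
  simp only [map_sub, map_mul, map_pow, map_add, map_one, map_natCast, aeval_X] at this
  linear_combination this

theorem Nat.exists_prime_pow_dvd_of_three_le {m : ℕ} (hm : 3 ≤ m) :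
    ∃ p a : ℕ, p.Prime ∧ 1 ≤ a ∧ (p = 2 → 2 ≤ a) ∧ p ^ a ∣ m := by
  rcases Nat.eq_two_pow_or_exists_odd_prime_and_dvd m with ⟨a, rfl⟩ | ⟨p, hp, hpm, hodd⟩
  · refine ⟨2, a, Nat.prime_two, ?_, fun _ => ?_, dvd_rfl⟩ <;>
    · by_contra! ha
      interval_cases a <;> omega
  · exact ⟨p, 1, hp, le_rfl, fun h => absurd (h ▸ hodd) (by decide), by simpa using hpm⟩

section Ring

variable {R : Type*} [Ring R]

-- Both expansions are proved in `ℤ[X]` and evaluated at `M`, so that no cast has to be commuted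
-- past `M` in the noncommutative ring `R`.
theorem exists_one_add_natCast_mul_pow_eq (c n : ℕ) (M : R) :
    ∃ T, (1 + c * M) ^ n = 1 + c * (n * M + c * T) := by
  obtain ⟨T, hT⟩ := exists_one_add_pow_eq ((c : ℤ[X]) * X) n
  set U : ℤ[X] := X ^ 2 * ((n.choose 2 : ℤ[X]) + (c : ℤ[X]) * X * T)
  have hX : (1 + (c : ℤ[X]) * X) ^ n = 1 + (c : ℤ[X]) * ((n : ℤ[X]) * X + (c : ℤ[X]) * U) := by
    rw [hT]; ring
  exact ⟨aeval M U, by simpa using congrArg (aeval M) hX⟩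

theorem exists_one_add_prime_pow_mul_pow_prime_eq {p : ℕ} (hp : p.Prime) {a : ℕ}
    (ha : 1 ≤ a) (hpa : p = 2 → 2 ≤ a) (M : R) :
    ∃ U, (1 + (p : R) ^ a * M) ^ p = 1 + p ^ (a + 1) * (M + p * U) := by
  obtain ⟨r, hr⟩ : p ^ (a + 2) ∣ p.choose 2 * p ^ (2 * a) := by
    rcases eq_or_ne p 2 with rfl | hp2
    · exact Dvd.dvd.mul_left (pow_dvd_pow 2 (by grind)) _
    · calc p ^ (a + 2) ∣ p * p ^ (2 * a) := by rw [← pow_succ']; exact pow_dvd_pow p (by omega)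
        _ ∣ p.choose 2 * p ^ (2 * a) :=
          mul_dvd_mul_right (hp.dvd_choose_self two_ne_zero (by have := hp.two_le; omega)) _
  obtain ⟨s, hs⟩ : p ^ (a + 2) ∣ p ^ (3 * a) := pow_dvd_pow p (by omega)
  have hr' := congrArg (Nat.cast : ℕ → ℤ[X]) hr
  have hs' := congrArg (Nat.cast : ℕ → ℤ[X]) hs
  push_cast at hr' hs'
  obtain ⟨T, hT⟩ := exists_one_add_pow_eq ((p : ℤ[X]) ^ a * X) p
  set U : ℤ[X] := (r : ℤ[X]) * X ^ 2 + (s : ℤ[X]) * X ^ 3 * T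
  have hX : (1 + (p : ℤ[X]) ^ a * X) ^ p = 1 + (p : ℤ[X]) ^ (a + 1) * (X + (p : ℤ[X]) * U) := by
    rw [hT]
    linear_combination X ^ 2 * hr' + X ^ 3 * T * hs'
  exact ⟨aeval M U, by simpa using congrArg (aeval M) hX⟩

theorem natCast_dvd_of_dvd_natCast_mul {p q : ℕ} (hpq : p.Coprime q) {M : R}
    (h : (p : R) ∣ q * M) : (p : R) ∣ M := by
  obtain ⟨u, v, huv⟩ := Nat.isCoprime_iff_coprime.mpr hpq
  obtain ⟨N, hN⟩ := h
  refine ⟨u * M + v * N, ?_⟩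
  calc M = ((u * p + v * q : ℤ) : R) * M := by rw [huv, Int.cast_one, one_mul]
    _ = p * (u * M + v * N) := by
      push_cast
      rw [add_mul, mul_assoc, mul_assoc, hN, ← mul_assoc, ← mul_assoc, Int.cast_comm,
        (Int.cast_commute v (p : R)).eq, mul_assoc, mul_assoc, mul_add]

variable [Module.IsTorsionFree ℤ R]

theorem natCast_dvd_of_one_add_prime_pow_mul_pow_eq_one {p : ℕ} (hp : p.Prime) {k : ℕ}
    (hk : 0 < k) {a : ℕ} (ha : 1 ≤ a) (hpa : p = 2 → 2 ≤ a) {M : R}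
    (h : (1 + (p : R) ^ a * M) ^ k = 1) : (p : R) ∣ M := by
  induction k using Nat.strong_induction_on generalizing a M with
  | _ k ih =>
  obtain rfl | hk1 := eq_or_ne k 1
  · have hM : ((p ^ a : ℕ) : ℤ) • M = 0 := by simpa [zsmul_eq_mul] using h
    rw [smul_eq_zero_iff_right (by positivity [hp.pos])] at hM
    exact hM ▸ dvd_zero _
  have hq := Nat.minFac_prime hk1
  obtain ⟨k', hkk'⟩ := k.minFac_dvd
  have hk' : 0 < k' := Nat.pos_of_mul_pos_left (hkk' ▸ hk)
  have hk'k : k' < k := hkk' ▸ lt_mul_left hk' hq.one_lt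
  rw [hkk', pow_mul] at h
  rcases eq_or_ne k.minFac p with hqp | hqp
  · obtain ⟨U, hU⟩ := exists_one_add_prime_pow_mul_pow_prime_eq hp ha hpa M
    rw [hqp, hU] at h
    exact (dvd_add_left (dvd_mul_right _ U)).mp (ih k' hk'k hk' (by omega) (by omega) h)
  · obtain ⟨T, hT⟩ := exists_one_add_natCast_mul_pow_eq (p ^ a) k.minFac M
    rw [Nat.cast_pow] at hT
    rw [hT] at h
    have hqM :=
      (dvd_add_left ((dvd_pow_self _ (by omega)).mul_right _)).mp (ih k' hk'k hk' ha hpa h)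
    exact natCast_dvd_of_dvd_natCast_mul ((Nat.coprime_primes hp hq).mpr hqp.symm) hqM

variable [Module.Finite ℤ R]

theorem eq_zero_of_forall_natCast_pow_dvd {p : ℕ} (hp : p ≠ 1) {M : R}
    (h : ∀ n, (p : R) ^ n ∣ M) : M = 0 := by
  have hI : Ideal.span {(p : ℤ)} ≠ ⊤ := by
    rw [Ne, Ideal.span_singleton_eq_top, Int.isUnit_iff]
    omega
  refine (IsHausdorff.of_isTorsionFree _ R hI).haus M fun n => ?_
  obtain ⟨N, rfl⟩ := h n
  rw [SModEq.zero, show (p : R) ^ n * N = ((p : ℤ) ^ n) • N by simp [zsmul_eq_mul]]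
  exact Submodule.smul_mem_smul (Ideal.pow_mem_pow (Ideal.mem_span_singleton_self _) n) trivial

theorem eq_one_of_pow_eq_one_of_sub_one_eq_zsmul {A δ : R} {m : ℤ} (hm : 3 ≤ m)
    (hA : A - 1 = m • δ) {k : ℕ} (hk : 0 < k) (hAk : A ^ k = 1) : A = 1 := by
  lift m to ℕ using (by omega)
  obtain ⟨p, a, hp, ha, hpa, t, rfl⟩ := Nat.exists_prime_pow_dvd_of_three_le (by omega : 3 ≤ m)
  have hAt : A = 1 + (p : R) ^ a * ((t : R) * δ) := by
    rw [← sub_eq_iff_eq_add', hA, zsmul_eq_mul, ← mul_assoc]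
    push_cast
    rfl
  suffices ∀ n, (p : R) ^ n ∣ (t : R) * δ by
    rw [hAt, eq_zero_of_forall_natCast_pow_dvd hp.ne_one this, mul_zero, add_zero]
  intro n
  induction n with
  | zero => simp
  | succ n ih =>
    obtain ⟨N, hN⟩ := ih
    have hN' : (1 + (p : R) ^ (a + n) * N) ^ k = 1 := by rw [pow_add, mul_assoc, ← hN, ← hAt, hAk]
    obtain ⟨N', rfl⟩ := natCast_dvd_of_one_add_prime_pow_mul_pow_eq_one hp hk (by omega)
      (fun h => (hpa h).trans (by omega)) hN'
    exact ⟨N', by rw [hN, pow_succ, mul_assoc]⟩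

end Ring

theorem Module.End.eq_one_of_pow_eq_one_of_sub_one_eq_zsmul {V : Type*} [AddCommGroup V]
    [Module ℤ V] [Module.Free ℤ V] [Module.Finite ℤ V] {A δ : Module.End ℤ V} {m : ℤ}
    (hm : 3 ≤ m) (hA : A - 1 = m • δ) {k : ℕ} (hk : 0 < k) (hAk : A ^ k = 1) : A = 1 := by
  let b := Module.Free.chooseBasis ℤ V
  let e := LinearMap.toMatrixAlgEquiv b
  apply (LinearMap.toMatrix b b).injective
  change e A = e 1
  have hA' : e A - 1 = m • e δ := by rw [← map_one e, ← map_sub, hA, map_zsmul]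
  have hAk' : e A ^ k = 1 := by rw [← map_pow, hAk, map_one]
  rw [map_one]
  exact _root_.eq_one_of_pow_eq_one_of_sub_one_eq_zsmul hm hA' hk hAk'

theorem IsOpenMap.continuousOn_image_of_comp {X Y Z : Type*} [TopologicalSpace X]
    [TopologicalSpace Y] [TopologicalSpace Z] {f : X → Y} {g : Y → Z} {s : Set X}
    (hf : IsOpenMap f) (hs : IsOpen s) (hg : ContinuousOn (g ∘ f) s) :
    ContinuousOn g (f '' s) := by
  rw [continuousOn_open_iff (hf s hs)]
  intro U hU
  rw [← Set.image_inter_preimage]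
  exact hf _ ((continuousOn_open_iff hs).mp hg U hU)

section UpperHalfPlane

open Complex Function.Periodic Real

variable {X : Type*} {Φ : ℂ → X}

theorem apply_add_intCast_of_apply_add_one
    (hper : ∀ z : ℂ, 0 < z.im → Φ (z + 1) = Φ z) {z : ℂ} (hz : 0 < z.im) (n : ℤ) :
    Φ (z + n) = Φ z := by
  induction n using Int.induction_on with
  | zero => simp
  | succ n ih => rw [Int.cast_add, Int.cast_one, ← add_assoc, hper _ (by simpa using hz), ih]
  | pred n ih =>
    rw [← ih, ← hper _ (by simpa using hz)]
    push_cast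
    ring_nf

theorem apply_invQParam_qParam_of_apply_add_one
    (hper : ∀ z : ℂ, 0 < z.im → Φ (z + 1) = Φ z) {z : ℂ} (hz : 0 < z.im) :
    Φ (invQParam 1 (qParam 1 z)) = Φ z := by
  obtain ⟨n, hn⟩ := qParam_left_inv_mod_period one_ne_zero z
  rw [hn, ofReal_one, mul_one, apply_add_intCast_of_apply_add_one hper hz]

theorem continuousOn_comp_invQParam_of_apply_add_one [TopologicalSpace X]
    (hper : ∀ z : ℂ, 0 < z.im → Φ (z + 1) = Φ z) (hΦ : ContinuousOn Φ {z : ℂ | 0 < z.im}) :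
    ContinuousOn (Φ ∘ invQParam 1) (Metric.ball 0 1 \ {0}) := by
  have hq : qParam 1 = Complex.exp ∘ Homeomorph.mulLeft₀ (2 * π * I) two_pi_I_ne_zero := by
    ext z
    simp [qParam]
  have hopen : IsOpenMap (qParam 1) := hq ▸ isOpenMap_exp.comp (Homeomorph.isOpenMap _)
  refine (hopen.continuousOn_image_of_comp (g := Φ ∘ invQParam 1)
    (isOpen_lt continuous_const continuous_im)
    (hΦ.congr fun z hz => apply_invQParam_qParam_of_apply_add_one hper hz)).mono ?_
  rintro w ⟨hw, hw0 : w ≠ 0⟩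
  refine ⟨invQParam 1 w, ?_, qParam_right_inv one_ne_zero hw0⟩
  have hlog : Real.log ‖w‖ < 0 := Real.log_neg (norm_pos_iff.mpr hw0) (by simpa using hw)
  show 0 < (invQParam 1 w).im
  rw [im_invQParam, neg_div, neg_mul, neg_pos]
  exact mul_neg_of_pos_of_neg (by positivity) hlog

end UpperHalfPlane

theorem trivial_monodromy_descends_general {D : Type*} [TopologicalSpace D]
    {G : Type*} [Group G] [MulAction G D]
    {HZ : Type*} [AddCommGroup HZ] [Module ℤ HZ] [Module.Free ℤ HZ] [Module.Finite ℤ HZ]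
    (ρ : G →* (Module.End ℤ HZ)ˣ) (hρ : Function.Injective ρ)
    (Φ : ℂ → D) (hΦ : ContinuousOn Φ {z : ℂ | 0 < z.im})
    (γ : G) (hper : ∀ z : ℂ, 0 < z.im → Φ (z + 1) = γ • Φ z)
    (m : ℤ) (hm : 3 ≤ m) (δ : Module.End ℤ HZ)
    (hcong : (ρ γ : Module.End ℤ HZ) - 1 = m • δ)
    (k : ℕ) (hk : 0 < k) (hfin : γ ^ k = 1) :
    γ = 1 ∧
    ∃ Ψ : ℂ → D, ContinuousOn Ψ (Metric.ball (0 : ℂ) 1 \ {0}) ∧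
      ∀ z : ℂ, 0 < z.im →
        Ψ (Complex.exp (2 * Real.pi * Complex.I * z)) = Φ z := by
  have hρk : (ρ γ : Module.End ℤ HZ) ^ k = 1 := by
    rw [← Units.val_pow_eq_pow_val, ← map_pow, hfin, map_one, Units.val_one]
  have hγ : γ = 1 := hρ <| Units.ext <| by
    rw [Module.End.eq_one_of_pow_eq_one_of_sub_one_eq_zsmul hm hcong hk hρk, map_one, Units.val_one]
  have hper₁ : ∀ z : ℂ, 0 < z.im → Φ (z + 1) = Φ z := fun z hz => by
    rw [hper z hz, hγ, one_smul]
  refine ⟨hγ, Φ ∘ Function.Periodic.invQParam 1,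
    continuousOn_comp_invQParam_of_apply_add_one hper₁ hΦ, fun z hz => ?_⟩
  simpa [Function.Periodic.qParam] using apply_invQParam_qParam_of_apply_add_one hper₁ hz

/-- Let `Φ` be a continuous map from the upper half plane
`{z : ℂ | 0 < im z}` to a space `D`, and `γ` a group element acting on `D`
with `Φ(z+1) = γ·Φ(z)`.  If `γ`, viewed (via a faithful monodromy
representation `ρ`) as an automorphism of a finitely generated free `ℤ`-module
preserving a bilinear form `Q`, satisfies `γ ≡ Id (mod m)` for some `m ≥ 3`
and has finite order, then `γ = Id` and `Φ` descends along
`z ↦ exp(2πiz)` to a map on the punctured disk (trivial monodromy). -/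
theorem trivial_monodromy_descends {D : Type*} [TopologicalSpace D]
    {G : Type*} [Group G] [MulAction G D]
    {HZ : Type*} [AddCommGroup HZ] [Module ℤ HZ] [Module.Free ℤ HZ] [Module.Finite ℤ HZ]
    (Q : HZ →ₗ[ℤ] HZ →ₗ[ℤ] ℤ)
    (ρ : G →* (Module.End ℤ HZ)ˣ) (hρ : Function.Injective ρ)
    (hQ : ∀ g : G, ∀ x y : HZ,
      Q ((ρ g : Module.End ℤ HZ) x) ((ρ g : Module.End ℤ HZ) y) = Q x y)
    (Φ : ℂ → D) (hΦ : ContinuousOn Φ {z : ℂ | 0 < z.im})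
    (γ : G) (hper : ∀ z : ℂ, 0 < z.im → Φ (z + 1) = γ • Φ z)
    (m : ℤ) (hm : 3 ≤ m) (δ : Module.End ℤ HZ)
    (hcong : (ρ γ : Module.End ℤ HZ) - 1 = m • δ)
    (k : ℕ) (hk : 0 < k) (hfin : γ ^ k = 1) :
    γ = 1 ∧
    ∃ Ψ : ℂ → D, ContinuousOn Ψ (Metric.ball (0 : ℂ) 1 \ {0}) ∧
      ∀ z : ℂ, 0 < z.im →
        Ψ (Complex.exp (2 * Real.pi * Complex.I * z)) = Φ z :=
  trivial_monodromy_descends_general ρ hρ Φ hΦ γ hper m hm δ hcong k hk hfin
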